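/- Let R be a PID, and let U be a submodule of R^n compatible with a collection σ of split submodules (i.e., σ ∪ {U} has a common basis). Then U is compatible with the closure of σ under sums and intersections, and conversely. -/

import Mathlib

/-- A collection of submodules of `R^n` has the common basis property if there
is a basis `b` of `R^n` such that each member is the span of a subset of `b`. -/
def HasCommonBasis (R : Type) [CommRing R] (n : ℕ)
    (σ : Set (Submodule R (Fin n → R))) : Prop :=
  ∃ b : Module.Basis (Fin n) R (Fin n → R),
    ∀ U ∈ σ, ∃ s : Set (Fin n), U = Submodule.span R (b '' s)

/-- The closure of a collection of submodules under (iterated) pairwise sums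
and intersections. -/
inductive SumInterClosure (R : Type) [CommRing R] (n : ℕ)
    (σ : Set (Submodule R (Fin n → R))) : Submodule R (Fin n → R) → Prop
  | base {U} : U ∈ σ → SumInterClosure R n σ U
  | sup {U V} : SumInterClosure R n σ U → SumInterClosure R n σ V →
      SumInterClosure R n σ (U ⊔ V)
  | inf {U V} : SumInterClosure R n σ U → SumInterClosure R n σ V →
      SumInterClosure R n σ (U ⊓ V)

/-! A basis adapted to `σ ∪ {U}` is already adapted to the closure: spans of subsets of a
basis `b` are closed under sums and intersections, since `span (b '' s)` consists of the
vectors whose `b`-coordinates are supported in `s`. -/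

theorem Module.Basis.span_image_inter {R M ι : Type*} [Semiring R] [AddCommMonoid M]
    [Module R M] (b : Module.Basis ι R M) (s t : Set ι) :
    Submodule.span R (b '' (s ∩ t)) =
      Submodule.span R (b '' s) ⊓ Submodule.span R (b '' t) := by
  ext x
  simp only [Submodule.mem_inf, Module.Basis.mem_span_image, Set.subset_inter_iff]

theorem SumInterClosure.exists_eq_span_image {R : Type} [CommRing R] {n : ℕ}
    {σ : Set (Submodule R (Fin n → R))} (b : Module.Basis (Fin n) R (Fin n → R))
    (hσ : ∀ W ∈ σ, ∃ s : Set (Fin n), W = Submodule.span R (b '' s))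
    {W : Submodule R (Fin n → R)} (hW : SumInterClosure R n σ W) :
    ∃ s : Set (Fin n), W = Submodule.span R (b '' s) := by
  induction hW with
  | base h => exact hσ _ h
  | sup _ _ ihU ihV =>
    obtain ⟨s, rfl⟩ := ihU
    obtain ⟨t, rfl⟩ := ihV
    exact ⟨s ∪ t, by rw [Set.image_union, Submodule.span_union]⟩
  | inf _ _ ihU ihV =>
    obtain ⟨s, rfl⟩ := ihU
    obtain ⟨t, rfl⟩ := ihV
    exact ⟨s ∩ t, (b.span_image_inter s t).symm⟩

theorem HasCommonBasis.mono {R : Type} [CommRing R] {n : ℕ}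
    {σ τ : Set (Submodule R (Fin n → R))} (h : HasCommonBasis R n τ) (hστ : σ ⊆ τ) :
    HasCommonBasis R n σ :=
  let ⟨b, hb⟩ := h
  ⟨b, fun W hW ↦ hb W (hστ hW)⟩

theorem stmt8_general (R : Type) [CommRing R]
    (n : ℕ) (σ : Set (Submodule R (Fin n → R))) (U : Submodule R (Fin n → R)) :
    HasCommonBasis R n (insert U σ) ↔
      HasCommonBasis R n (insert U {W | SumInterClosure R n σ W}) := by
  constructor
  · rintro ⟨b, hb⟩
    refine ⟨b, ?_⟩
    rintro W (rfl | hW)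
    · exact hb W (Set.mem_insert _ _)
    · exact hW.exists_eq_span_image b fun V hV ↦ hb V (Set.mem_insert_of_mem _ hV)
  · intro h
    exact h.mono (Set.insert_subset_insert fun _ ↦ SumInterClosure.base)

/-- Over a PID, a submodule `U` of `R^n` is compatible with a collection `σ` of
split submodules (i.e. `σ ∪ {U}` has a common basis) if and only if it is
compatible with the closure of `σ` under sums and intersections. -/
theorem stmt8 (R : Type) [CommRing R] [IsDomain R] [IsPrincipalIdealRing R]
    (n : ℕ) (σ : Set (Submodule R (Fin n → R))) (U : Submodule R (Fin n → R))
    (hsplit : ∀ W ∈ σ, ∃ C : Submodule R (Fin n → R), IsCompl W C) :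
    HasCommonBasis R n (insert U σ) ↔
      HasCommonBasis R n (insert U {W | SumInterClosure R n σ W}) :=
  stmt8_general R n σ U
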